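/- Fix a smooth function p : ℝ × [0,ℓ] → ℝ, real numbers t₀ < t₁, and smooth fields x, y, θ : ℝ × [0,ℓ] → ℝ. Consider the Lagrangian density L = (ρ/2)(ẋ² + ẏ²) + (α/2)θ̇² − (β/2)(θ′)² − (K/2)((x″)² + (y″)²) − (p/2)((x′)² + (y′)² − 1) and the action S = ∫_{t₀}^{t₁} ∫₀^ℓ L dt ds. Then (x, y, θ) is a stationary point of S under all smooth variations (V_x, V_y, V_θ) with compact support contained in (t₀, t₁) × (0, ℓ) — that is, the derivative at ε = 0 of ε ↦ S(x + εV_x, y + εV_y, θ + εV_θ) vanishes for all such variations — if and only if the free planar Cosserat rod equations ρẍ + Kx⁗ = (p x′)′, ρÿ + Ky⁗ = (p y′)′, and αθ̈ − βθ″ = 0 hold on (t₀, t₁) × (0, ℓ). -/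

import Mathlib

open MeasureTheory

/-- Partial derivative with respect to the first (time) variable. -/
noncomputable def pt (f : ℝ → ℝ → ℝ) : ℝ → ℝ → ℝ := fun t s => deriv (fun τ => f τ s) t

/-- Partial derivative with respect to the second (arclength) variable. -/
noncomputable def ps (f : ℝ → ℝ → ℝ) : ℝ → ℝ → ℝ := fun t s => deriv (fun σ => f t σ) s

/-- Smoothness of a field of two real variables. -/
def Smooth2 (f : ℝ → ℝ → ℝ) : Prop := ContDiff ℝ (⊤ : ℕ∞) (fun p : ℝ × ℝ => f p.1 p.2)

/-- Energy density of the planar Cosserat rod. -/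
noncomputable def Edens (ρ α β K : ℝ) (x y θ : ℝ → ℝ → ℝ) : ℝ → ℝ → ℝ := fun t s =>
  ρ / 2 * ((pt x t s) ^ 2 + (pt y t s) ^ 2) + α / 2 * (pt θ t s) ^ 2
    + K / 2 * ((ps (ps x) t s) ^ 2 + (ps (ps y) t s) ^ 2) + β / 2 * (ps θ t s) ^ 2

/-- Lagrangian density of the planar Cosserat rod with inextensibility multiplier `p`. -/
noncomputable def rodLag (ρ α β K : ℝ) (p x y θ : ℝ → ℝ → ℝ) : ℝ → ℝ → ℝ := fun t s =>
  ρ / 2 * ((pt x t s) ^ 2 + (pt y t s) ^ 2) + α / 2 * (pt θ t s) ^ 2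
    - β / 2 * (ps θ t s) ^ 2 - K / 2 * ((ps (ps x) t s) ^ 2 + (ps (ps y) t s) ^ 2)
    - p t s / 2 * ((ps x t s) ^ 2 + (ps y t s) ^ 2 - 1)

/-!
The action is a quadratic polynomial in `ε`, so its derivative at `0` is the integral of the
first-variation density `δL`. All integrations by parts (once in `t` for the kinetic terms, once in
`s` for the twist and constraint terms, twice in `s` for the bending terms) are packaged in the
pointwise identity `δL + E · V = ∂ₜ G + ∂ₛ H`, where `E` collects the Euler–Lagrange residuals and
the fluxes `G`, `H` vanish on the boundary of the rectangle together with the variation `V`.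
Hence the derivative is `-∫ E · V`, and the fundamental lemma of the calculus of variations turns
its vanishing for all compactly supported `V` into `E = 0` on the open rectangle.
-/

open Set
open scoped ContDiff

namespace Smooth2

variable {f g : ℝ → ℝ → ℝ}

theorem continuous (hf : Smooth2 f) : Continuous fun q : ℝ × ℝ => f q.1 q.2 :=
  ContDiff.continuous hf

theorem flip (hf : Smooth2 f) : Smooth2 (flip f) :=
  hf.comp (contDiff_snd.prodMk contDiff_fst)

theorem mul (hf : Smooth2 f) (hg : Smooth2 g) : Smooth2 fun t s => f t s * g t s :=
  ContDiff.mul hf hg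

theorem hasDerivAt_fderiv_apply (hf : Smooth2 f) (t s : ℝ) :
    HasDerivAt (fun τ => f τ s) (fderiv ℝ (fun q : ℝ × ℝ => f q.1 q.2) (t, s) (1, 0)) t := by
  have h := (hf.differentiable (by simp) (t, s)).hasFDerivAt.comp_hasDerivAt t
    ((hasDerivAt_id t).prodMk (hasDerivAt_const t s))
  exact h

theorem hasDerivAt_pt (hf : Smooth2 f) (t s : ℝ) : HasDerivAt (fun τ => f τ s) (pt f t s) t :=
  (hf.hasDerivAt_fderiv_apply t s).differentiableAt.hasDerivAt

-- `ps f t s` is definitionally `pt (flip f) s t`.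
theorem hasDerivAt_ps (hf : Smooth2 f) (t s : ℝ) : HasDerivAt (fun σ => f t σ) (ps f t s) s :=
  hf.flip.hasDerivAt_pt s t

theorem pt (hf : Smooth2 f) : Smooth2 (_root_.pt f) := by
  have h : (fun q : ℝ × ℝ => _root_.pt f q.1 q.2)
      = fun q => fderiv ℝ (fun q : ℝ × ℝ => f q.1 q.2) q (1, 0) :=
    funext fun q => (hf.hasDerivAt_fderiv_apply q.1 q.2).deriv
  unfold Smooth2
  rw [h]
  exact (hf.fderiv_right (by simp)).clm_apply contDiff_const

theorem ps (hf : Smooth2 f) : Smooth2 (_root_.ps f) :=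
  hf.flip.pt.flip

end Smooth2

theorem HasDerivAt.pt_eq {f : ℝ → ℝ → ℝ} {a t s : ℝ} (h : HasDerivAt (fun τ => f τ s) a t) :
    pt f t s = a :=
  h.deriv

theorem HasDerivAt.ps_eq {f : ℝ → ℝ → ℝ} {a t s : ℝ} (h : HasDerivAt (fun σ => f t σ) a s) :
    ps f t s = a :=
  h.deriv

theorem pt_add_const_mul {f g : ℝ → ℝ → ℝ} (hf : Smooth2 f) (hg : Smooth2 g) (ε : ℝ) :
    pt (fun t s => f t s + ε * g t s) = fun t s => pt f t s + ε * pt g t s :=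
  funext₂ fun t s => ((hf.hasDerivAt_pt t s).add ((hg.hasDerivAt_pt t s).const_mul ε)).pt_eq

theorem ps_add_const_mul {f g : ℝ → ℝ → ℝ} (hf : Smooth2 f) (hg : Smooth2 g) (ε : ℝ) :
    ps (fun t s => f t s + ε * g t s) = fun t s => ps f t s + ε * ps g t s :=
  funext₂ fun t s => ((hf.hasDerivAt_ps t s).add ((hg.hasDerivAt_ps t s).const_mul ε)).ps_eq

section Rectangle

variable {a b c d : ℝ}

theorem integrableOn_Ioc_prod_Ioc {f : ℝ × ℝ → ℝ} (hf : Continuous f) :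
    IntegrableOn f (Ioc a b ×ˢ Ioc c d) :=
  (hf.continuousOn.integrableOn_compact (isCompact_Icc.prod isCompact_Icc)).mono_set
    (prod_mono Ioc_subset_Icc_self Ioc_subset_Icc_self)

theorem setIntegral_Ioc_prod_Ioc (hab : a ≤ b) (hcd : c ≤ d) {f : ℝ × ℝ → ℝ}
    (hf : Continuous f) :
    ∫ q in Ioc a b ×ˢ Ioc c d, f q = ∫ t in a..b, ∫ s in c..d, f (t, s) := by
  have hint : IntegrableOn f (Ioc a b ×ˢ Ioc c d) := integrableOn_Ioc_prod_Ioc hf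
  rw [Measure.volume_eq_prod] at hint ⊢
  simp only [setIntegral_prod _ hint, intervalIntegral.integral_of_le hab,
    intervalIntegral.integral_of_le hcd]

theorem setIntegral_pt (hab : a ≤ b) (hcd : c ≤ d) {G : ℝ → ℝ → ℝ} (hG : Smooth2 G) :
    ∫ q in Ioc a b ×ˢ Ioc c d, pt G q.1 q.2 = ∫ s in c..d, (G b s - G a s) := by
  rw [setIntegral_Ioc_prod_Ioc hab hcd hG.pt.continuous, intervalIntegral_intervalIntegral_swap]
  · refine intervalIntegral.integral_congr fun s _ => ?_
    exact intervalIntegral.integral_eq_sub_of_hasDerivAt (fun t _ => hG.hasDerivAt_pt t s)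
      ((hG.pt.continuous.comp (Continuous.prodMk_left s)).intervalIntegrable a b)
  · rw [uIoc_of_le hab, uIoc_of_le hcd]
    exact integrableOn_Ioc_prod_Ioc hG.pt.continuous

theorem setIntegral_ps (hab : a ≤ b) (hcd : c ≤ d) {H : ℝ → ℝ → ℝ} (hH : Smooth2 H) :
    ∫ q in Ioc a b ×ˢ Ioc c d, ps H q.1 q.2 = ∫ t in a..b, (H t d - H t c) := by
  rw [setIntegral_Ioc_prod_Ioc hab hcd hH.ps.continuous]
  refine intervalIntegral.integral_congr fun t _ => ?_
  exact intervalIntegral.integral_eq_sub_of_hasDerivAt (fun s _ => hH.hasDerivAt_ps t s)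
    ((hH.ps.continuous.comp (Continuous.prodMk_right t)).intervalIntegrable c d)

end Rectangle

theorem hasDerivAt_integral_add_mul_add_sq_mul {X : Type*} [MeasurableSpace X] {μ : Measure X}
    {f₀ f₁ f₂ : X → ℝ} (h₀ : Integrable f₀ μ) (h₁ : Integrable f₁ μ) (h₂ : Integrable f₂ μ) :
    HasDerivAt (fun ε => ∫ x, f₀ x + ε * f₁ x + ε ^ 2 * f₂ x ∂μ) (∫ x, f₁ x ∂μ) 0 := by
  have h : (fun ε => ∫ x, f₀ x + ε * f₁ x + ε ^ 2 * f₂ x ∂μ)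
      = fun ε => (∫ x, f₀ x ∂μ) + ε * ∫ x, f₁ x ∂μ + ε ^ 2 * ∫ x, f₂ x ∂μ := by
    ext ε
    rw [integral_add (f := fun x => f₀ x + ε * f₁ x) (h₀.add (h₁.const_mul ε)) (h₂.const_mul _),
      integral_add h₀ (h₁.const_mul ε), integral_const_mul, integral_const_mul]
  rw [h]
  refine ((((hasDerivAt_id (0 : ℝ)).mul_const (∫ x, f₁ x ∂μ)).const_add (∫ x, f₀ x ∂μ)).add
    ((hasDerivAt_pow 2 (0 : ℝ)).mul_const (∫ x, f₂ x ∂μ))).congr_deriv ?_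
  simp

theorem eqOn_zero_of_forall_setIntegral_mul_eq_zero {E : Type*} [NormedAddCommGroup E]
    [NormedSpace ℝ E] [FiniteDimensional ℝ E] [MeasurableSpace E] [BorelSpace E] {μ : Measure E}
    [IsLocallyFiniteMeasure μ] [μ.IsOpenPosMeasure] {U S : Set E} {f : E → ℝ}
    (hU : IsOpen U) (hUS : U ⊆ S) (hf : Continuous f)
    (h : ∀ g : E → ℝ, ContDiff ℝ ∞ g → tsupport g ⊆ U → ∫ x in S, f x * g x ∂μ = 0) :
    EqOn f 0 U := by
  have hae := hU.ae_eq_zero_of_integral_contDiff_smul_eq_zero (μ := μ)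
    (hf.locallyIntegrable.locallyIntegrableOn U) fun g hg _ hgU => by
      rw [← h g hg hgU, setIntegral_eq_integral_of_forall_compl_eq_zero fun x hx =>
        by rw [image_eq_zero_of_notMem_tsupport fun hx' => hx (hUS (hgU hx')), mul_zero]]
      simp only [smul_eq_mul, mul_comm]
  exact Measure.eqOn_open_of_ae_eq ((ae_restrict_iff' hU.measurableSet).2 hae) hU
    hf.continuousOn continuousOn_const

theorem apply_eq_zero_of_notMem_tsupport {V : ℝ → ℝ → ℝ} {t s : ℝ}
    (h : (t, s) ∉ tsupport fun q : ℝ × ℝ => V q.1 q.2) : V t s = 0 :=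
  image_eq_zero_of_notMem_tsupport (f := fun q : ℝ × ℝ => V q.1 q.2) h

theorem ps_eq_zero_of_notMem_tsupport {V : ℝ → ℝ → ℝ} {t s : ℝ}
    (h : (t, s) ∉ tsupport fun q : ℝ × ℝ => V q.1 q.2) : ps V t s = 0 := by
  have hV : (fun σ => V t σ) =ᶠ[nhds s] fun _ => 0 :=
    ((Continuous.prodMk_right t).tendsto s).eventually (notMem_tsupport_iff_eventuallyEq.1 h)
  exact hV.deriv_eq.trans (deriv_const s 0)

noncomputable def rodLagVariation (ρ α β K : ℝ) (p x y θ Vx Vy Vθ : ℝ → ℝ → ℝ) :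
    ℝ → ℝ → ℝ := fun t s =>
  ρ * (pt x t s * pt Vx t s + pt y t s * pt Vy t s) + α * (pt θ t s * pt Vθ t s)
    - β * (ps θ t s * ps Vθ t s)
    - K * (ps (ps x) t s * ps (ps Vx) t s + ps (ps y) t s * ps (ps Vy) t s)
    - p t s * (ps x t s * ps Vx t s + ps y t s * ps Vy t s)

noncomputable def eulerLagrangePos (ρ K : ℝ) (p x : ℝ → ℝ → ℝ) : ℝ → ℝ → ℝ := fun t s =>
  ρ * pt (pt x) t s + K * ps (ps (ps (ps x))) t s - ps (fun t' s' => p t' s' * ps x t' s') t s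

noncomputable def eulerLagrangeAngle (α β : ℝ) (θ : ℝ → ℝ → ℝ) : ℝ → ℝ → ℝ := fun t s =>
  α * pt (pt θ) t s - β * ps (ps θ) t s

noncomputable def rodEulerLagrangePairing (ρ α β K : ℝ) (p x y θ Vx Vy Vθ : ℝ → ℝ → ℝ) :
    ℝ → ℝ → ℝ := fun t s =>
  eulerLagrangePos ρ K p x t s * Vx t s + eulerLagrangePos ρ K p y t s * Vy t s
    + eulerLagrangeAngle α β θ t s * Vθ t s

def RodEquationsOn (ρ α β K : ℝ) (p x y θ : ℝ → ℝ → ℝ) (U : Set (ℝ × ℝ)) : Prop :=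
  ∀ q ∈ U, eulerLagrangePos ρ K p x q.1 q.2 = 0 ∧ eulerLagrangePos ρ K p y q.1 q.2 = 0
    ∧ eulerLagrangeAngle α β θ q.1 q.2 = 0

noncomputable def rodTimeFlux (ρ α : ℝ) (x y θ Vx Vy Vθ : ℝ → ℝ → ℝ) : ℝ → ℝ → ℝ := fun t s =>
  ρ * (pt x t s * Vx t s + pt y t s * Vy t s) + α * (pt θ t s * Vθ t s)

noncomputable def rodArcFlux (β K : ℝ) (p x y θ Vx Vy Vθ : ℝ → ℝ → ℝ) : ℝ → ℝ → ℝ := fun t s =>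
  -(β * (ps θ t s * Vθ t s))
    - K * (ps (ps x) t s * ps Vx t s - ps (ps (ps x)) t s * Vx t s
      + (ps (ps y) t s * ps Vy t s - ps (ps (ps y)) t s * Vy t s))
    - (p t s * ps x t s * Vx t s + p t s * ps y t s * Vy t s)

section Rod

variable {ρ α β K t₀ t₁ ℓ : ℝ} {p x y θ Vx Vy Vθ : ℝ → ℝ → ℝ}

/-- The `ε²` coefficient is the Lagrangian of the variation itself, up to the constant `p / 2`
of the constraint term. -/
theorem rodLag_add_smul (hx : Smooth2 x) (hy : Smooth2 y) (hθ : Smooth2 θ)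
    (hVx : Smooth2 Vx) (hVy : Smooth2 Vy) (hVθ : Smooth2 Vθ) (ε t s : ℝ) :
    rodLag ρ α β K p (fun t s => x t s + ε * Vx t s) (fun t s => y t s + ε * Vy t s)
        (fun t s => θ t s + ε * Vθ t s) t s
      = rodLag ρ α β K p x y θ t s + ε * rodLagVariation ρ α β K p x y θ Vx Vy Vθ t s
        + ε ^ 2 * (rodLag ρ α β K p Vx Vy Vθ t s - p t s / 2) := by
  simp only [rodLag, rodLagVariation, pt_add_const_mul hx hVx, pt_add_const_mul hy hVy,
    pt_add_const_mul hθ hVθ, ps_add_const_mul hx hVx, ps_add_const_mul hy hVy,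
    ps_add_const_mul hθ hVθ, ps_add_const_mul hx.ps hVx.ps, ps_add_const_mul hy.ps hVy.ps]
  ring

theorem rodLagVariation_add_rodEulerLagrangePairing (hp : Smooth2 p) (hx : Smooth2 x)
    (hy : Smooth2 y) (hθ : Smooth2 θ) (hVx : Smooth2 Vx) (hVy : Smooth2 Vy) (hVθ : Smooth2 Vθ)
    (t s : ℝ) :
    rodLagVariation ρ α β K p x y θ Vx Vy Vθ t s
        + rodEulerLagrangePairing ρ α β K p x y θ Vx Vy Vθ t s
      = pt (rodTimeFlux ρ α x y θ Vx Vy Vθ) t s + ps (rodArcFlux β K p x y θ Vx Vy Vθ) t s := by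
  have hG := (((((hx.pt.hasDerivAt_pt t s).mul (hVx.hasDerivAt_pt t s)).add
    ((hy.pt.hasDerivAt_pt t s).mul (hVy.hasDerivAt_pt t s))).const_mul ρ).add
    (((hθ.pt.hasDerivAt_pt t s).mul (hVθ.hasDerivAt_pt t s)).const_mul α)).pt_eq
    (f := rodTimeFlux ρ α x y θ Vx Vy Vθ)
  have hH := (((((hθ.ps.hasDerivAt_ps t s).mul (hVθ.hasDerivAt_ps t s)).const_mul β).neg.sub
    (((((hx.ps.ps.hasDerivAt_ps t s).mul (hVx.ps.hasDerivAt_ps t s)).sub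
      ((hx.ps.ps.ps.hasDerivAt_ps t s).mul (hVx.hasDerivAt_ps t s))).add
      (((hy.ps.ps.hasDerivAt_ps t s).mul (hVy.ps.hasDerivAt_ps t s)).sub
      ((hy.ps.ps.ps.hasDerivAt_ps t s).mul (hVy.hasDerivAt_ps t s)))).const_mul K)).sub
    ((((hp.mul hx.ps).hasDerivAt_ps t s).mul (hVx.hasDerivAt_ps t s)).add
      (((hp.mul hy.ps).hasDerivAt_ps t s).mul (hVy.hasDerivAt_ps t s)))).ps_eq
    (f := rodArcFlux β K p x y θ Vx Vy Vθ)
  rw [hG, hH]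
  simp only [rodLagVariation, rodEulerLagrangePairing, eulerLagrangePos, eulerLagrangeAngle]
  ring

theorem smooth2_rodTimeFlux (hx : Smooth2 x) (hy : Smooth2 y) (hθ : Smooth2 θ)
    (hVx : Smooth2 Vx) (hVy : Smooth2 Vy) (hVθ : Smooth2 Vθ) :
    Smooth2 (rodTimeFlux ρ α x y θ Vx Vy Vθ) := by
  have := hx.pt; have := hy.pt; have := hθ.pt
  unfold Smooth2 rodTimeFlux at *
  fun_prop

theorem smooth2_rodArcFlux (hp : Smooth2 p) (hx : Smooth2 x) (hy : Smooth2 y) (hθ : Smooth2 θ)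
    (hVx : Smooth2 Vx) (hVy : Smooth2 Vy) (hVθ : Smooth2 Vθ) :
    Smooth2 (rodArcFlux β K p x y θ Vx Vy Vθ) := by
  have := hx.ps; have := hx.ps.ps; have := hx.ps.ps.ps; have := hy.ps; have := hy.ps.ps
  have := hy.ps.ps.ps; have := hθ.ps; have := hVx.ps; have := hVy.ps
  unfold Smooth2 rodArcFlux at *
  fun_prop

theorem continuous_rodLag (hp : Smooth2 p) (hx : Smooth2 x) (hy : Smooth2 y) (hθ : Smooth2 θ) :
    Continuous fun q : ℝ × ℝ => rodLag ρ α β K p x y θ q.1 q.2 := by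
  have := hp.continuous; have := hx.pt.continuous; have := hy.pt.continuous
  have := hθ.pt.continuous; have := hθ.ps.continuous; have := hx.ps.continuous
  have := hy.ps.continuous; have := hx.ps.ps.continuous; have := hy.ps.ps.continuous
  unfold rodLag
  fun_prop

theorem continuous_rodLagVariation (hp : Smooth2 p) (hx : Smooth2 x) (hy : Smooth2 y)
    (hθ : Smooth2 θ) (hVx : Smooth2 Vx) (hVy : Smooth2 Vy) (hVθ : Smooth2 Vθ) :
    Continuous fun q : ℝ × ℝ => rodLagVariation ρ α β K p x y θ Vx Vy Vθ q.1 q.2 := by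
  have := hp.continuous; have := hx.pt.continuous; have := hy.pt.continuous
  have := hθ.pt.continuous; have := hθ.ps.continuous; have := hx.ps.continuous
  have := hy.ps.continuous; have := hx.ps.ps.continuous; have := hy.ps.ps.continuous
  have := hVx.pt.continuous; have := hVy.pt.continuous; have := hVθ.pt.continuous
  have := hVθ.ps.continuous; have := hVx.ps.continuous; have := hVy.ps.continuous
  have := hVx.ps.ps.continuous; have := hVy.ps.ps.continuous
  unfold rodLagVariation
  fun_prop

theorem continuous_eulerLagrangePos (hp : Smooth2 p) (hx : Smooth2 x) :
    Continuous fun q : ℝ × ℝ => eulerLagrangePos ρ K p x q.1 q.2 := by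
  have := hx.pt.pt.continuous; have := hx.ps.ps.ps.ps.continuous
  have := (hp.mul hx.ps).ps.continuous
  unfold eulerLagrangePos
  fun_prop

theorem continuous_eulerLagrangeAngle (hθ : Smooth2 θ) :
    Continuous fun q : ℝ × ℝ => eulerLagrangeAngle α β θ q.1 q.2 := by
  have := hθ.pt.pt.continuous; have := hθ.ps.ps.continuous
  unfold eulerLagrangeAngle
  fun_prop

theorem continuous_rodEulerLagrangePairing (hp : Smooth2 p) (hx : Smooth2 x) (hy : Smooth2 y)
    (hθ : Smooth2 θ) (hVx : Smooth2 Vx) (hVy : Smooth2 Vy) (hVθ : Smooth2 Vθ) :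
    Continuous fun q : ℝ × ℝ => rodEulerLagrangePairing ρ α β K p x y θ Vx Vy Vθ q.1 q.2 :=
  (((continuous_eulerLagrangePos hp hx).mul hVx.continuous).add
    ((continuous_eulerLagrangePos hp hy).mul hVy.continuous)).add
    ((continuous_eulerLagrangeAngle hθ).mul hVθ.continuous)

theorem rodTimeFlux_eq_zero_of_notMem {S : Set (ℝ × ℝ)}
    (sVx : tsupport (fun q : ℝ × ℝ => Vx q.1 q.2) ⊆ S)
    (sVy : tsupport (fun q : ℝ × ℝ => Vy q.1 q.2) ⊆ S)
    (sVθ : tsupport (fun q : ℝ × ℝ => Vθ q.1 q.2) ⊆ S) {t s : ℝ} (hts : (t, s) ∉ S) :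
    rodTimeFlux ρ α x y θ Vx Vy Vθ t s = 0 := by
  simp [rodTimeFlux, apply_eq_zero_of_notMem_tsupport (hts <| sVx ·),
    apply_eq_zero_of_notMem_tsupport (hts <| sVy ·),
    apply_eq_zero_of_notMem_tsupport (hts <| sVθ ·)]

theorem rodArcFlux_eq_zero_of_notMem {S : Set (ℝ × ℝ)}
    (sVx : tsupport (fun q : ℝ × ℝ => Vx q.1 q.2) ⊆ S)
    (sVy : tsupport (fun q : ℝ × ℝ => Vy q.1 q.2) ⊆ S)
    (sVθ : tsupport (fun q : ℝ × ℝ => Vθ q.1 q.2) ⊆ S) {t s : ℝ} (hts : (t, s) ∉ S) :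
    rodArcFlux β K p x y θ Vx Vy Vθ t s = 0 := by
  simp [rodArcFlux, apply_eq_zero_of_notMem_tsupport (hts <| sVx ·),
    apply_eq_zero_of_notMem_tsupport (hts <| sVy ·),
    apply_eq_zero_of_notMem_tsupport (hts <| sVθ ·),
    ps_eq_zero_of_notMem_tsupport (hts <| sVx ·), ps_eq_zero_of_notMem_tsupport (hts <| sVy ·)]

theorem setIntegral_rodLagVariation (ht : t₀ ≤ t₁) (hℓ : 0 ≤ ℓ) (hp : Smooth2 p)
    (hx : Smooth2 x) (hy : Smooth2 y) (hθ : Smooth2 θ)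
    (hVx : Smooth2 Vx) (hVy : Smooth2 Vy) (hVθ : Smooth2 Vθ)
    (sVx : tsupport (fun q : ℝ × ℝ => Vx q.1 q.2) ⊆ Ioo t₀ t₁ ×ˢ Ioo 0 ℓ)
    (sVy : tsupport (fun q : ℝ × ℝ => Vy q.1 q.2) ⊆ Ioo t₀ t₁ ×ˢ Ioo 0 ℓ)
    (sVθ : tsupport (fun q : ℝ × ℝ => Vθ q.1 q.2) ⊆ Ioo t₀ t₁ ×ˢ Ioo 0 ℓ) :
    ∫ q in Ioc t₀ t₁ ×ˢ Ioc 0 ℓ, rodLagVariation ρ α β K p x y θ Vx Vy Vθ q.1 q.2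
      = -∫ q in Ioc t₀ t₁ ×ˢ Ioc 0 ℓ, rodEulerLagrangePairing ρ α β K p x y θ Vx Vy Vθ q.1 q.2 := by
  have hG : ∫ q in Ioc t₀ t₁ ×ˢ Ioc 0 ℓ, pt (rodTimeFlux ρ α x y θ Vx Vy Vθ) q.1 q.2 = 0 := by
    rw [setIntegral_pt ht hℓ (smooth2_rodTimeFlux hx hy hθ hVx hVy hVθ)]
    simp [rodTimeFlux_eq_zero_of_notMem sVx sVy sVθ]
  have hH : ∫ q in Ioc t₀ t₁ ×ˢ Ioc 0 ℓ, ps (rodArcFlux β K p x y θ Vx Vy Vθ) q.1 q.2 = 0 := by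
    rw [setIntegral_ps ht hℓ (smooth2_rodArcFlux hp hx hy hθ hVx hVy hVθ)]
    simp [rodArcFlux_eq_zero_of_notMem sVx sVy sVθ]
  rw [eq_neg_iff_add_eq_zero, ← integral_add
    (integrableOn_Ioc_prod_Ioc (continuous_rodLagVariation hp hx hy hθ hVx hVy hVθ))
    (integrableOn_Ioc_prod_Ioc (continuous_rodEulerLagrangePairing hp hx hy hθ hVx hVy hVθ))]
  simp only [rodLagVariation_add_rodEulerLagrangePairing hp hx hy hθ hVx hVy hVθ]
  rw [integral_add
    (integrableOn_Ioc_prod_Ioc (smooth2_rodTimeFlux hx hy hθ hVx hVy hVθ).pt.continuous)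
    (integrableOn_Ioc_prod_Ioc (smooth2_rodArcFlux hp hx hy hθ hVx hVy hVθ).ps.continuous),
    hG, hH, add_zero]

theorem hasDerivAt_rodAction (ht : t₀ ≤ t₁) (hℓ : 0 ≤ ℓ) (hp : Smooth2 p)
    (hx : Smooth2 x) (hy : Smooth2 y) (hθ : Smooth2 θ)
    (hVx : Smooth2 Vx) (hVy : Smooth2 Vy) (hVθ : Smooth2 Vθ)
    (sVx : tsupport (fun q : ℝ × ℝ => Vx q.1 q.2) ⊆ Ioo t₀ t₁ ×ˢ Ioo 0 ℓ)
    (sVy : tsupport (fun q : ℝ × ℝ => Vy q.1 q.2) ⊆ Ioo t₀ t₁ ×ˢ Ioo 0 ℓ)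
    (sVθ : tsupport (fun q : ℝ × ℝ => Vθ q.1 q.2) ⊆ Ioo t₀ t₁ ×ˢ Ioo 0 ℓ) :
    HasDerivAt (fun ε : ℝ =>
        ∫ t in t₀..t₁, ∫ s in (0 : ℝ)..ℓ,
          rodLag ρ α β K p (fun t' s' => x t' s' + ε * Vx t' s')
            (fun t' s' => y t' s' + ε * Vy t' s') (fun t' s' => θ t' s' + ε * Vθ t' s') t s)
      (-∫ q in Ioc t₀ t₁ ×ˢ Ioc 0 ℓ, rodEulerLagrangePairing ρ α β K p x y θ Vx Vy Vθ q.1 q.2)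
      0 := by
  have hL : Continuous fun q : ℝ × ℝ => rodLag ρ α β K p x y θ q.1 q.2 :=
    continuous_rodLag hp hx hy hθ
  have hA : Continuous fun q : ℝ × ℝ => rodLagVariation ρ α β K p x y θ Vx Vy Vθ q.1 q.2 :=
    continuous_rodLagVariation hp hx hy hθ hVx hVy hVθ
  have hB : Continuous fun q : ℝ × ℝ => rodLag ρ α β K p Vx Vy Vθ q.1 q.2 - p q.1 q.2 / 2 :=
    (continuous_rodLag hp hVx hVy hVθ).sub (hp.continuous.div_const 2)
  have hS : (fun ε : ℝ => ∫ t in t₀..t₁, ∫ s in (0 : ℝ)..ℓ,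
        rodLag ρ α β K p (fun t' s' => x t' s' + ε * Vx t' s')
          (fun t' s' => y t' s' + ε * Vy t' s') (fun t' s' => θ t' s' + ε * Vθ t' s') t s)
      = fun ε => ∫ q in Ioc t₀ t₁ ×ˢ Ioc 0 ℓ, rodLag ρ α β K p x y θ q.1 q.2
          + ε * rodLagVariation ρ α β K p x y θ Vx Vy Vθ q.1 q.2
          + ε ^ 2 * (rodLag ρ α β K p Vx Vy Vθ q.1 q.2 - p q.1 q.2 / 2) := by
    ext ε
    rw [setIntegral_Ioc_prod_Ioc ht hℓ (by fun_prop)]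
    simp only [rodLag_add_smul hx hy hθ hVx hVy hVθ]
  rw [hS, ← setIntegral_rodLagVariation ht hℓ hp hx hy hθ hVx hVy hVθ sVx sVy sVθ]
  exact hasDerivAt_integral_add_mul_add_sq_mul (integrableOn_Ioc_prod_Ioc hL)
    (integrableOn_Ioc_prod_Ioc hA) (integrableOn_Ioc_prod_Ioc hB)

theorem rodEquationsOn_of_forall_setIntegral_eq_zero {U S : Set (ℝ × ℝ)} (hU : IsOpen U)
    (hUS : U ⊆ S) (hp : Smooth2 p) (hx : Smooth2 x) (hy : Smooth2 y) (hθ : Smooth2 θ)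
    (h : ∀ Vx Vy Vθ, Smooth2 Vx → Smooth2 Vy → Smooth2 Vθ →
      tsupport (fun q : ℝ × ℝ => Vx q.1 q.2) ⊆ U → tsupport (fun q : ℝ × ℝ => Vy q.1 q.2) ⊆ U →
      tsupport (fun q : ℝ × ℝ => Vθ q.1 q.2) ⊆ U →
      ∫ q in S, rodEulerLagrangePairing ρ α β K p x y θ Vx Vy Vθ q.1 q.2 = 0) :
    RodEquationsOn ρ α β K p x y θ U := by
  have h0 : Smooth2 fun _ _ => (0 : ℝ) := contDiff_const
  have s0 : tsupport (fun _ : ℝ × ℝ => (0 : ℝ)) ⊆ U := by simp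
  have hX := eqOn_zero_of_forall_setIntegral_mul_eq_zero hU hUS (continuous_eulerLagrangePos hp hx)
    fun g hg hgU => by
      simpa [rodEulerLagrangePairing] using h (fun t s => g (t, s)) _ _ hg h0 h0 hgU s0 s0
  have hY := eqOn_zero_of_forall_setIntegral_mul_eq_zero hU hUS (continuous_eulerLagrangePos hp hy)
    fun g hg hgU => by
      simpa [rodEulerLagrangePairing] using h _ (fun t s => g (t, s)) _ h0 hg h0 s0 hgU s0
  have hΘ := eqOn_zero_of_forall_setIntegral_mul_eq_zero hU hUS (continuous_eulerLagrangeAngle hθ)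
    fun g hg hgU => by
      simpa [rodEulerLagrangePairing] using h _ _ (fun t s => g (t, s)) h0 h0 hg s0 s0 hgU
  exact fun q hq => ⟨hX hq, hY hq, hΘ hq⟩

theorem RodEquationsOn.rodEulerLagrangePairing_eq_zero {U : Set (ℝ × ℝ)}
    (hEL : RodEquationsOn ρ α β K p x y θ U)
    (sVx : tsupport (fun q : ℝ × ℝ => Vx q.1 q.2) ⊆ U)
    (sVy : tsupport (fun q : ℝ × ℝ => Vy q.1 q.2) ⊆ U)
    (sVθ : tsupport (fun q : ℝ × ℝ => Vθ q.1 q.2) ⊆ U) (t s : ℝ) :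
    rodEulerLagrangePairing ρ α β K p x y θ Vx Vy Vθ t s = 0 := by
  by_cases hts : (t, s) ∈ U
  · obtain ⟨hX, hY, hΘ⟩ := hEL _ hts
    simp [rodEulerLagrangePairing, hX, hY, hΘ]
  · simp [rodEulerLagrangePairing, apply_eq_zero_of_notMem_tsupport (hts <| sVx ·),
      apply_eq_zero_of_notMem_tsupport (hts <| sVy ·),
    apply_eq_zero_of_notMem_tsupport (hts <| sVθ ·)]

theorem rodEquationsOn_Ioo_prod_Ioo_iff {a b c d : ℝ} :
    RodEquationsOn ρ α β K p x y θ (Ioo a b ×ˢ Ioo c d)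
      ↔ ∀ t ∈ Ioo a b, ∀ s ∈ Ioo c d,
          ρ * pt (pt x) t s + K * ps (ps (ps (ps x))) t s
            = ps (fun t' s' => p t' s' * ps x t' s') t s ∧
          ρ * pt (pt y) t s + K * ps (ps (ps (ps y))) t s
            = ps (fun t' s' => p t' s' * ps y t' s') t s ∧
          α * pt (pt θ) t s - β * ps (ps θ) t s = 0 := by
  simp only [RodEquationsOn, eulerLagrangePos, eulerLagrangeAngle, mem_prod, Prod.forall,
    sub_eq_zero]
  grind

end Rod

theorem free_rod_variational_principle_general
    (ρ α β K ℓ : ℝ) (hℓ : 0 < ℓ)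
    (t₀ t₁ : ℝ) (ht : t₀ < t₁)
    (p x y θ : ℝ → ℝ → ℝ)
    (hp : Smooth2 p) (hx : Smooth2 x) (hy : Smooth2 y) (hθ : Smooth2 θ) :
    ((∀ Vx Vy Vθ : ℝ → ℝ → ℝ, Smooth2 Vx → Smooth2 Vy → Smooth2 Vθ →
        tsupport (fun q : ℝ × ℝ => Vx q.1 q.2) ⊆ Set.Ioo t₀ t₁ ×ˢ Set.Ioo (0 : ℝ) ℓ →
        tsupport (fun q : ℝ × ℝ => Vy q.1 q.2) ⊆ Set.Ioo t₀ t₁ ×ˢ Set.Ioo (0 : ℝ) ℓ →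
        tsupport (fun q : ℝ × ℝ => Vθ q.1 q.2) ⊆ Set.Ioo t₀ t₁ ×ˢ Set.Ioo (0 : ℝ) ℓ →
        HasDerivAt (fun ε : ℝ =>
          ∫ t in t₀..t₁, ∫ s in (0 : ℝ)..ℓ,
            rodLag ρ α β K p
              (fun t' s' => x t' s' + ε * Vx t' s')
              (fun t' s' => y t' s' + ε * Vy t' s')
              (fun t' s' => θ t' s' + ε * Vθ t' s') t s) 0 0)
      ↔ (∀ t ∈ Set.Ioo t₀ t₁, ∀ s ∈ Set.Ioo (0 : ℝ) ℓ,
          ρ * pt (pt x) t s + K * ps (ps (ps (ps x))) t s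
            = ps (fun t' s' => p t' s' * ps x t' s') t s ∧
          ρ * pt (pt y) t s + K * ps (ps (ps (ps y))) t s
            = ps (fun t' s' => p t' s' * ps y t' s') t s ∧
          α * pt (pt θ) t s - β * ps (ps θ) t s = 0)) := by
  rw [← rodEquationsOn_Ioo_prod_Ioo_iff]
  constructor
  · intro H
    refine rodEquationsOn_of_forall_setIntegral_eq_zero (isOpen_Ioo.prod isOpen_Ioo)
      (prod_mono Ioo_subset_Ioc_self Ioo_subset_Ioc_self) hp hx hy hθ
      fun Vx Vy Vθ hVx hVy hVθ sVx sVy sVθ => neg_eq_zero.1 ?_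
    exact (hasDerivAt_rodAction ht.le hℓ.le hp hx hy hθ hVx hVy hVθ sVx sVy sVθ).unique
      (H Vx Vy Vθ hVx hVy hVθ sVx sVy sVθ)
  · intro hEL Vx Vy Vθ hVx hVy hVθ sVx sVy sVθ
    refine (hasDerivAt_rodAction ht.le hℓ.le hp hx hy hθ hVx hVy hVθ sVx sVy sVθ).congr_deriv ?_
    rw [setIntegral_eq_zero_of_forall_eq_zero fun q _ =>
      hEL.rodEulerLagrangePairing_eq_zero sVx sVy sVθ q.1 q.2, neg_zero]

/-- the planar Cosserat rod configuration is a stationary point of the action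
under compactly supported variations iff it satisfies the free rod field equations. -/
theorem free_rod_variational_principle
    (ρ α β K ℓ : ℝ) (hρ : 0 < ρ) (hα : 0 < α) (hβ : 0 < β) (hK : 0 < K) (hℓ : 0 < ℓ)
    (t₀ t₁ : ℝ) (ht : t₀ < t₁)
    (p x y θ : ℝ → ℝ → ℝ)
    (hp : Smooth2 p) (hx : Smooth2 x) (hy : Smooth2 y) (hθ : Smooth2 θ) :
    ((∀ Vx Vy Vθ : ℝ → ℝ → ℝ, Smooth2 Vx → Smooth2 Vy → Smooth2 Vθ →
        tsupport (fun q : ℝ × ℝ => Vx q.1 q.2) ⊆ Set.Ioo t₀ t₁ ×ˢ Set.Ioo (0 : ℝ) ℓ →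
        tsupport (fun q : ℝ × ℝ => Vy q.1 q.2) ⊆ Set.Ioo t₀ t₁ ×ˢ Set.Ioo (0 : ℝ) ℓ →
        tsupport (fun q : ℝ × ℝ => Vθ q.1 q.2) ⊆ Set.Ioo t₀ t₁ ×ˢ Set.Ioo (0 : ℝ) ℓ →
        HasDerivAt (fun ε : ℝ =>
          ∫ t in t₀..t₁, ∫ s in (0 : ℝ)..ℓ,
            rodLag ρ α β K p
              (fun t' s' => x t' s' + ε * Vx t' s')
              (fun t' s' => y t' s' + ε * Vy t' s')
              (fun t' s' => θ t' s' + ε * Vθ t' s') t s) 0 0)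
      ↔ (∀ t ∈ Set.Ioo t₀ t₁, ∀ s ∈ Set.Ioo (0 : ℝ) ℓ,
          ρ * pt (pt x) t s + K * ps (ps (ps (ps x))) t s
            = ps (fun t' s' => p t' s' * ps x t' s') t s ∧
          ρ * pt (pt y) t s + K * ps (ps (ps (ps y))) t s
            = ps (fun t' s' => p t' s' * ps y t' s') t s ∧
          α * pt (pt θ) t s - β * ps (ps θ) t s = 0)) :=
  free_rod_variational_principle_general ρ α β K ℓ hℓ t₀ t₁ ht p x y θ hp hx hy hθ
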